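/- Let X be a real Hilbert space and let A and B be nonempty closed convex subsets of X. Define the ADMM sequences by a_{k+1} = P_A(b_k − u_k), b_{k+1} = P_B(a_{k+1} + u_k), u_{k+1} = u_k + a_{k+1} − b_{k+1}, and the Douglas–Rachford sequences by y_k = P_B x_k, x_{k+1} = P_A(2y_k − x_k) + x_k − y_k. If x_0 = b_0 ∈ B and u_0 = 0, then for every k ≥ 1, x_k = a_k + u_{k−1} and y_k = b_k. -/
import Mathlib


/-- Equivalence of ADMM and Douglas–Rachford for two-set feasibility: if
`x_0 = b_0 ∈ B` and `u_0 = 0`, then for every `k ≥ 1`, `x_k = a_k + u_{k-1}`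
and `y_k = b_k`. Here `P_A`, `P_B` are the (nearest-point) projections onto the
nonempty closed convex sets `A` and `B`. -/
theorem stmt_9 {X : Type*} [NormedAddCommGroup X] [InnerProductSpace ℝ X] [CompleteSpace X]
    (A B : Set X) (hA : A.Nonempty) (hAc : IsClosed A) (hAconv : Convex ℝ A)
    (hB : B.Nonempty) (hBc : IsClosed B) (hBconv : Convex ℝ B)
    (PA PB : X → X)
    (hPA : ∀ z, PA z ∈ A ∧ ∀ a ∈ A, ‖z - PA z‖ ≤ ‖z - a‖)
    (hPB : ∀ z, PB z ∈ B ∧ ∀ b ∈ B, ‖z - PB z‖ ≤ ‖z - b‖)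
    (a b u x y : ℕ → X)
    (ha : ∀ k, a (k + 1) = PA (b k - u k))
    (hb : ∀ k, b (k + 1) = PB (a (k + 1) + u k))
    (hu : ∀ k, u (k + 1) = u k + a (k + 1) - b (k + 1))
    (hy : ∀ k, y k = PB (x k))
    (hx : ∀ k, x (k + 1) = PA ((2 : ℝ) • y k - x k) + x k - y k)
    (hx0 : x 0 = b 0) (hb0 : b 0 ∈ B) (hu0 : u 0 = 0) :
    ∀ k : ℕ, x (k + 1) = a (k + 1) + u k ∧ y (k + 1) = b (k + 1) := by
  -- PB fixes points of B
  have hfix : PB (b 0) = b 0 := by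
    have h := (hPB (b 0)).2 (b 0) hb0
    simp only [sub_self, norm_zero] at h
    have : ‖b 0 - PB (b 0)‖ = 0 := le_antisymm h (norm_nonneg _)
    have := sub_eq_zero.mp (norm_eq_zero.mp this)
    exact this.symm
  have hy0 : y 0 = b 0 := by rw [hy 0, hx0, hfix]
  -- main induction on x (k+1) = a (k+1) + u k
  have main : ∀ k : ℕ, x (k + 1) = a (k + 1) + u k := by
    intro k
    induction k with
    | zero =>
      rw [hx 0, hy0, hx0, ha 0, hu0]
      simp [two_smul]
    | succ n ih =>
      have hyn : y (n + 1) = b (n + 1) := by rw [hy (n + 1), ih, hb n]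
      rw [hx (n + 1), hyn, ih, ha (n + 1), hu n]
      have harg : (2 : ℝ) • b (n + 1) - (a (n + 1) + u n)
          = b (n + 1) - (u n + a (n + 1) - b (n + 1)) := by
        rw [two_smul]; abel
      rw [harg]
      abel
  intro k
  refine ⟨main k, ?_⟩
  rw [hy (k + 1), main k, hb k]
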